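/- For p = 2, the Hodge numbers b and d of the Borcea-Voisin fourfold are invariant under the mirror involution: with b(r_1,a_1,r_2,a_2) = 648 + a_1 a_2 - 30 r_2 - 30 r_1 - 12 a_2 - 12 a_1 + 3 r_1 r_2 and d(r_1,a_1,r_2,a_2) = 22 - r_1 r_2/2 + a_1 a_2/2 + 5 r_2 - 6 a_2 + 5 r_1 - 6 a_1, one has b(20-r_1, a_1, 20-r_2, a_2) = b(r_1,a_1,r_2,a_2) and d(20-r_1, a_1, 20-r_2, a_2) = d(r_1,a_1,r_2,a_2). -/
import Mathlib


/-- For `p = 2`, the Hodge numbers `b = h^{2,2}` and `d = h^{2,1}` of the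
Borcea–Voisin fourfold are invariant under the mirror involution `(rᵢ, aᵢ) ↦ (20 - rᵢ, aᵢ)`. -/
theorem hodge_mirror_invariant_p2 (r₁ a₁ r₂ a₂ : ℚ)
    (B : ℚ → ℚ → ℚ → ℚ → ℚ) (D : ℚ → ℚ → ℚ → ℚ → ℚ)
    (hB : ∀ x₁ y₁ x₂ y₂, B x₁ y₁ x₂ y₂ =
      648 + y₁ * y₂ - 30 * x₂ - 30 * x₁ - 12 * y₂ - 12 * y₁ + 3 * x₁ * x₂)
    (hD : ∀ x₁ y₁ x₂ y₂, D x₁ y₁ x₂ y₂ =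
      22 - x₁ * x₂ / 2 + y₁ * y₂ / 2 + 5 * x₂ - 6 * y₂ + 5 * x₁ - 6 * y₁) :
    B (20 - r₁) a₁ (20 - r₂) a₂ = B r₁ a₁ r₂ a₂ ∧
      D (20 - r₁) a₁ (20 - r₂) a₂ = D r₁ a₁ r₂ a₂ := by
  exact ⟨by rw [hB, hB]; ring, by rw [hD, hD]; ring⟩
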